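/- Let n ≥ 1 and let A denote the graded quotient ring ℚ[x,y]/(h_{n+1}, h_{n+2}) with its weighted grading (deg x = 1, deg y = 2). Then the degree-2n graded piece of A is one-dimensional over ℚ and is spanned by the image of y^n; in particular the image of y^n in A is nonzero. -/
import Mathlib


open MvPolynomial

/-- The complete homogeneous symmetric polynomial of degree `k` in two variables,
expressed in the elementary symmetric polynomials `x = X 0`, `y = X 1`. -/
noncomputable def h : ℕ → MvPolynomial (Fin 2) ℚ
  | 0 => 1
  | 1 => X 0
  | (k + 2) => X 0 * h (k + 1) - X 1 * h k

/-- The ideal `(h_{n+1}, h_{n+2})` of `ℚ[x,y]`. -/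
noncomputable def I (n : ℕ) : Ideal (MvPolynomial (Fin 2) ℚ) :=
  Ideal.span {h (n + 1), h (n + 2)}

/-- The degree-`d` graded piece of `ℚ[x,y]/(h_{n+1}, h_{n+2})` for the weighted grading
with `deg x = 1`, `deg y = 2`: the image of the weighted-degree-`d` homogeneous component
of `ℚ[x,y]` in the quotient. -/
noncomputable def gradedPiece (n d : ℕ) :
    Submodule ℚ (MvPolynomial (Fin 2) ℚ ⧸ I n) :=
  Submodule.map (Ideal.Quotient.mkₐ ℚ (I n)).toLinearMap
    (weightedHomogeneousSubmodule ℚ ![1, 2] d)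

lemma h_rec (k : ℕ) : h (k + 2) = X 0 * h (k + 1) - X 1 * h k := rfl

noncomputable abbrev σm : MvPolynomial (Fin 2) ℚ →ₐ[ℚ] MvPolynomial (Fin 2) ℚ :=
  aeval ![X 0 + X 1, X 0 * X 1]

lemma aeval_h : ∀ k, (X 0 - X 1) * σm (h k) = X 0 ^ (k + 1) - X 1 ^ (k + 1)
  | 0 => by simp [h]
  | 1 => by simp [h]; ring
  | (k + 2) => by
    have h1 := aeval_h (k + 1)
    have h2 := aeval_h k
    rw [h_rec, map_sub, map_mul, map_mul, aeval_X, aeval_X]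
    show (X 0 - X 1) * ((X 0 + X 1) * σm (h (k+1)) - X 0 * X 1 * σm (h k)) = _
    calc (X 0 - X 1) * ((X 0 + X 1) * σm (h (k+1)) - X 0 * X 1 * σm (h k))
        = (X 0 + X 1) * ((X 0 - X 1) * σm (h (k+1))) - X 0 * X 1 * ((X 0 - X 1) * σm (h k)) := by ring
      _ = (X 0 + X 1) * (X 0 ^ (k+2) - X 1 ^ (k+2)) - X 0 * X 1 * (X 0 ^ (k+1) - X 1 ^ (k+1)) := by rw [h1, h2]
      _ = X 0 ^ (k + 2 + 1) - X 1 ^ (k + 2 + 1) := by ring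

lemma h_mem (n : ℕ) : ∀ m, h (n + 1 + m) ∈ I n
  | 0 => Ideal.subset_span (by simp)
  | 1 => Ideal.subset_span (by simp)
  | (m + 2) => by
    have h1 := h_mem n (m + 1)
    have h2 := h_mem n m
    have : n + 1 + (m + 2) = (n + 1 + m) + 2 := by ring
    rw [this, h_rec]
    exact sub_mem (Ideal.mul_mem_left _ _ (by rw [show n + 1 + m + 1 = n + 1 + (m+1) from rfl]; exact h1))
      (Ideal.mul_mem_left _ _ h2)

lemma ymul_mem (n : ℕ) : ∀ j k, n + 1 ≤ j + k → X 1 ^ j * h k ∈ I n := by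
  intro j
  induction j with
  | zero =>
    intro k hk
    obtain ⟨m, hm⟩ := Nat.exists_eq_add_of_le hk
    have hk2 : k = n + 1 + m := by omega
    rw [hk2]
    simpa using h_mem n m
  | succ j ih =>
    intro k hk
    by_cases hk' : n + 1 ≤ j + k
    · have := Ideal.mul_mem_left (I n) (X 1) (ih k hk')
      rw [show X 1 * (X 1 ^ j * h k) = X 1 ^ (j+1) * h k by ring] at this
      exact this
    · have e : X 1 ^ (j+1) * h k = X 0 * (X 1 ^ j * h (k+1)) - X 1 ^ j * h (k+2) := by
        rw [h_rec]; ring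
      rw [e]
      exact sub_mem (Ideal.mul_mem_left _ _ (ih (k+1) (by omega))) (ih (k+2) (by omega))

lemma mk_mem_span (n : ℕ) : ∀ a b k, a + 2*b + k = 2*n →
    Ideal.Quotient.mk (I n) (X 0 ^ a * X 1 ^ b * h k) ∈
      Submodule.span ℚ {Ideal.Quotient.mk (I n) (X 1 ^ n)} := by
  intro a
  induction a with
  | zero =>
    intro b k hd
    by_cases hbk : n + 1 ≤ b + k
    · have : X 0 ^ 0 * X 1 ^ b * h k ∈ I n := by
        simpa using ymul_mem n b k hbk
      rw [Ideal.Quotient.eq_zero_iff_mem.2 this]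
      exact zero_mem _
    · have hb : b = n := by omega
      have hk : k = 0 := by omega
      rw [hk, hb, show X 0 ^ 0 * X 1 ^ n * h 0 = X 1 ^ n by simp [h]]
      exact Submodule.mem_span_singleton_self _
  | succ a ih =>
    intro b k hd
    cases k with
    | zero =>
      have e : X 0 ^ (a+1) * X 1 ^ b * h 0 = X 0 ^ a * X 1 ^ b * h 1 := by
        simp [h]; ring
      rw [e]
      exact ih b 1 (by omega)
    | succ k =>
      have e : X 0 ^ (a+1) * X 1 ^ b * h (k+1) =
          X 0 ^ a * X 1 ^ b * h (k+2) + X 0 ^ a * X 1 ^ (b+1) * h k := by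
        rw [h_rec]; ring
      rw [e, map_add]
      exact add_mem (ih b (k+2) (by omega)) (ih (b+1) k (by omega))

lemma mk_ypow_ne (n : ℕ) : Ideal.Quotient.mk (I n) (X 1 ^ n) ≠ 0 := by
  intro h0
  have hmem : (X 1 : MvPolynomial (Fin 2) ℚ) ^ n ∈ I n := Ideal.Quotient.eq_zero_iff_mem.1 h0
  rw [I, Ideal.mem_span_pair] at hmem
  obtain ⟨a, b, hab⟩ := hmem
  set t : Fin 2 →₀ ℕ := Finsupp.single 0 (n+1) + Finsupp.single 1 n with ht
  have key : ∀ (q : MvPolynomial (Fin 2) ℚ) (k : ℕ), n + 1 ≤ k →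
      coeff t ((X 0 - X 1) * σm (q * h k)) = 0 := by
    intro q k hk
    rw [map_mul, show (X 0 - X 1) * (σm q * σm (h k)) = σm q * ((X 0 - X 1) * σm (h k)) by ring,
      aeval_h, mul_sub, X_pow_eq_monomial, X_pow_eq_monomial, coeff_sub,
      coeff_mul_monomial', coeff_mul_monomial']
    rw [if_neg, if_neg, sub_zero]
    · intro hle
      have := hle 1
      simp [ht, Finsupp.single_apply] at this
      omega
    · intro hle
      have := hle 0
      simp [ht, Finsupp.single_apply] at this
      omega
  have h1 : coeff t ((X 0 - X 1) * σm (X 1 ^ n : MvPolynomial (Fin 2) ℚ)) = 1 := by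
    rw [map_pow, aeval_X]
    show coeff t ((X 0 - X 1) * (X 0 * X 1) ^ n) = 1
    have e : (X 0 - X 1 : MvPolynomial (Fin 2) ℚ) * (X 0 * X 1) ^ n
        = X 0 ^ (n+1) * X 1 ^ n - X 0 ^ n * X 1 ^ (n+1) := by ring
    rw [e, coeff_sub, X_pow_eq_monomial, X_pow_eq_monomial, X_pow_eq_monomial, X_pow_eq_monomial,
      monomial_mul, monomial_mul, coeff_monomial, coeff_monomial]
    rw [if_pos rfl, if_neg, mul_one, sub_zero]
    intro he
    have := congrArg (fun f => f 0) he
    simp [ht, Finsupp.single_apply] at this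
  have h2 : coeff t ((X 0 - X 1) * σm (X 1 ^ n : MvPolynomial (Fin 2) ℚ)) = 0 := by
    rw [← hab, map_add, mul_add, coeff_add, key a (n+1) le_rfl, key b (n+2) (by omega), add_zero]
  rw [h1] at h2
  exact one_ne_zero h2

/-- The degree-`2n` graded piece of `ℚ[x,y]/(h_{n+1}, h_{n+2})` is one-dimensional,
spanned by the image of `y^n`; in particular that image is nonzero. -/
theorem stmt6 (n : ℕ) (hn : 1 ≤ n) :
    Module.finrank ℚ (gradedPiece n (2 * n)) = 1 ∧
    gradedPiece n (2 * n) =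
      Submodule.span ℚ {Ideal.Quotient.mk (I n) (X 1 ^ n)} ∧
    Ideal.Quotient.mk (I n) (X 1 ^ n) ≠ 0 := by
  have hne := mk_ypow_ne n
  have hwh : IsWeightedHomogeneous ![1,2] ((X 1 : MvPolynomial (Fin 2) ℚ) ^ n) (2 * n) := by
    intro d hd
    rw [X_pow_eq_monomial, coeff_monomial] at hd
    split_ifs at hd with he
    · subst he
      simp [Finsupp.weight_apply, Finsupp.sum_single_index]
      ring
    · exact absurd rfl hd
  have heq : gradedPiece n (2 * n) =
      Submodule.span ℚ {Ideal.Quotient.mk (I n) (X 1 ^ n)} := by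
    apply le_antisymm
    · rintro z ⟨p, hp, rfl⟩
      rw [SetLike.mem_coe, mem_weightedHomogeneousSubmodule] at hp
      rw [show (Ideal.Quotient.mkₐ ℚ (I n)).toLinearMap p
          = ∑ v ∈ p.support, (Ideal.Quotient.mkₐ ℚ (I n)).toLinearMap ((monomial v) (coeff v p))
          by rw [← map_sum]; exact congrArg _ (as_sum p)]
      apply Submodule.sum_mem
      intro m hm
      have hdeg : m 0 + 2 * m 1 = 2 * n := by
        have := hp (mem_support_iff.1 hm)
        rw [Finsupp.weight_apply, Finsupp.sum_fintype] at this
        · simpa [Fin.sum_univ_two, mul_comm] using this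
        · intro i; simp
      have hm2 : m = Finsupp.single 0 (m 0) + Finsupp.single 1 (m 1) := by
        ext i; fin_cases i <;> simp [Finsupp.single_apply]
      have hmono : (monomial m) (coeff m p) =
          coeff m p • (X 0 ^ m 0 * X 1 ^ m 1 * h 0) := by
        rw [show h 0 = 1 from rfl, mul_one, smul_eq_C_mul,
          X_pow_eq_monomial, X_pow_eq_monomial, monomial_mul, C_mul_monomial, mul_one, ← hm2, mul_one]
      rw [hmono, map_smul]
      apply Submodule.smul_mem
      have := mk_mem_span n (m 0) (m 1) 0 (by omega)
      simpa [Ideal.Quotient.mkₐ_eq_mk] using this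
    · rw [Submodule.span_le, Set.singleton_subset_iff]
      exact ⟨X 1 ^ n, hwh, rfl⟩
  refine ⟨?_, heq, hne⟩
  rw [heq]
  exact finrank_span_singleton hne
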